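/- arXiv:1910.03674 — 2 statements merged into one kernel-verified Lean document; each statement's English description precedes it below -/
import Mathlib

section
/- Let A be a Stone topological L-algebra, with its underlying compact Hausdorff space carrying its (unique) compatible uniform structure. Then A is residually finite (i.e., profinite) if and only if the family of self-maps belonging to the translation monoid M(A) is equicontinuous. -/
/-!
If `A` is residually finite, the kernels of continuous homomorphisms to finite discrete
algebras are clopen neighbourhoods of the diagonal that are mapped into themselves by every
translation; they separate the points off the diagonal, so by compactness finite intersections
of them are arbitrarily small entourages, and `M(A)` is uniformly equicontinuous.

Conversely, let a clopen set `K` contain `a` but not `b`. Uniform equicontinuity of `M(A)`, applied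
to the entourage `{(x, y) | x ∈ K ↔ y ∈ K}`, shows that the syntactic congruence of `K` contains
an entourage, so its classes are open. Changing one argument of an operation is an elementary
translation, so this relation is a congruence, and since `A` is compact its quotient is a finite
discrete algebra in which `a` and `b` stay apart.
-/

open FirstOrder Language Structure

/-- An elementary translation of an `L`-algebra `A`. -/
def IsElemTranslation (L : FirstOrder.Language) {A : Type*} [L.Structure A]
    (g : Function.End A) : Prop :=
  ∃ (n : ℕ) (f : L.Functions n) (i : Fin n) (v : Fin n → A),
    g = fun a => funMap f (Function.update v i a)

/-- The translation monoid `M(A)`. -/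
def translationMonoid (L : FirstOrder.Language) (A : Type*) [L.Structure A] :
    Submonoid (Function.End A) :=
  Submonoid.closure {g | IsElemTranslation L g}

/-- The syntactic congruence of `K ⊆ A`. -/
def syntCong (L : FirstOrder.Language) {A : Type*} [L.Structure A] (K : Set A)
    (a b : A) : Prop :=
  ∀ g ∈ translationMonoid L A, (g a ∈ K ↔ g b ∈ K)

/-- Residual finiteness of a topological `L`-algebra. -/
def ResiduallyFinite (L : FirstOrder.Language) (A : Type*) [TopologicalSpace A]
    [L.Structure A] : Prop :=
  ∀ a b : A, a ≠ b →
    ∃ (F : Type) (_ : Finite F) (iT : TopologicalSpace F) (iS : L.Structure F),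
      letI := iT; letI := iS;
      DiscreteTopology F ∧ ∃ φ : A →[L] F, Continuous (φ : A → F) ∧ φ a ≠ φ b

open Filter Function Set Topology Uniformity

theorem exists_finset_biInter_subset_of_isOpen {X ι : Type*} [TopologicalSpace X]
    [CompactSpace X] {V : ι → Set X} (hV : ∀ i, IsClosed (V i)) {W : Set X} (hW : IsOpen W)
    (hsep : ∀ x ∉ W, ∃ i, x ∉ V i) : ∃ t : Finset ι, ⋂ i ∈ t, V i ⊆ W := by
  obtain ⟨t, ht⟩ := hW.isClosed_compl.isCompact.elim_finite_subfamily_closed V hV <|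
    eq_empty_of_forall_notMem fun x ⟨hxW, hxV⟩ =>
      (hsep x hxW).elim fun i hi => hi (mem_iInter.1 hxV i)
  exact ⟨t, fun x hx => by_contra fun hxW => ht.subset ⟨hxW, hx⟩⟩

theorem isClopen_setOf_apply_eq {X D : Type*} [TopologicalSpace X] [TopologicalSpace D]
    [DiscreteTopology D] {f : X → D} (hf : Continuous f) :
    IsClopen {q : X × X | f q.1 = f q.2} :=
  (isClopen_discrete (diagonal D)).preimage (hf.prodMap hf)

theorem isOpen_setOf_rel_of_mem_uniformity {X : Type*} [UniformSpace X] (s : Setoid X)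
    (hs : {q : X × X | s q.1 q.2} ∈ 𝓤 X) (x : X) : IsOpen {y | s x y} :=
  isOpen_iff_mem_nhds.2 fun y hxy =>
    mem_of_superset (UniformSpace.ball_mem_nhds y hs) fun _ hyz => s.iseqv.trans hxy hyz

theorem CompactSpace.uniformEquicontinuous_of_forall_exists_isClopen_mapsTo {ι X : Type*}
    [UniformSpace X] [CompactSpace X] {F : ι → X → X}
    (hsep : ∀ p ∉ diagonal X, ∃ V : Set (X × X), IsClopen V ∧ diagonal X ⊆ V ∧ p ∉ V ∧
      ∀ i, MapsTo (Prod.map (F i) (F i)) V V) :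
    UniformEquicontinuous F := by
  intro U hU
  rw [← nhdsSet_diagonal_eq_uniformity] at hU ⊢
  obtain ⟨W, hWo, hdW, hWU⟩ := mem_nhdsSet_iff_exists.1 hU
  let 𝒱 := {V : Set (X × X) // IsClopen V ∧ diagonal X ⊆ V ∧
    ∀ i, MapsTo (Prod.map (F i) (F i)) V V}
  obtain ⟨t, ht⟩ := exists_finset_biInter_subset_of_isOpen (V := fun V : 𝒱 => V.1)
    (fun V => V.2.1.isClosed) hWo fun p hpW => by
      obtain ⟨V, hV, hdV, hpV, hFV⟩ := hsep p fun hp => hpW (hdW hp)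
      exact ⟨⟨V, hV, hdV, hFV⟩, hpV⟩
  have hV₀ : IsOpen (⋂ V ∈ t, V.1) := isOpen_biInter_finset fun V _ => V.2.1.isOpen
  refine mem_of_superset (hV₀.mem_nhdsSet.2 (subset_iInter₂ fun V _ => V.2.2.1)) fun q hq i => ?_
  exact hWU (ht (mem_iInter₂.2 fun V hV => V.2.2.2 i (mem_iInter₂.1 hq V hV)))

theorem Setoid.rel_apply_of_forall_rel_update {ι α β : Type*} [Finite ι] [DecidableEq ι]
    (s : Setoid β) {r : α → α → Prop} {f : (ι → α) → β}
    (hf : ∀ v i x y, r x y → s (f (update v i x)) (f (update v i y)))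
    {v w : ι → α} (h : ∀ i, r (v i) (w i)) : s (f v) (f w) := by
  cases nonempty_fintype ι
  suffices ∀ t : Finset ι, s (f v) (f (t.piecewise w v)) by simpa using this Finset.univ
  intro t
  induction t using Finset.induction_on with
  | empty => rw [Finset.piecewise_empty]
  | insert i t hi ih =>
    refine s.iseqv.trans ih ?_
    rw [Finset.piecewise_insert, ← update_eq_self i (t.piecewise w v), update_idem,
      Finset.piecewise_eq_of_notMem _ _ _ hi]
    exact hf _ i _ _ (h i)

section TranslationMonoid

variable {L : Language} {A : Type*} [L.Structure A]

theorem elemTranslation_mem_translationMonoid {n : ℕ} (f : L.Functions n) (i : Fin n)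
    (v : Fin n → A) :
    (fun a => funMap f (update v i a) : Function.End A) ∈ translationMonoid L A :=
  Submonoid.subset_closure ⟨n, f, i, v, rfl⟩

theorem FirstOrder.Language.Hom.mapsTo_setOf_apply_eq_of_mem_translationMonoid {B : Type*}
    [L.Structure B] (φ : A →[L] B) {g : Function.End A} (hg : g ∈ translationMonoid L A) :
    MapsTo (Prod.map g g) {q | φ q.1 = φ q.2} {q | φ q.1 = φ q.2} := by
  induction hg using Submonoid.closure_induction with
  | mem t ht =>
    obtain ⟨n, f, i, v, rfl⟩ := ht
    intro q (hq : φ q.1 = φ q.2)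
    simp only [mem_ofPred_eq, Prod.map_fst, Prod.map_snd, φ.map_fun, comp_update, hq]
  | one => exact mapsTo_id _
  | mul s t _ _ hs ht => exact hs.comp ht

section SyntacticCongruence

variable (L) in
def syntSetoid (K : Set A) : Setoid A where
  r := syntCong L K
  iseqv := ⟨fun _ _ _ => Iff.rfl, fun h g hg => (h g hg).symm,
    fun h₁ h₂ g hg => (h₁ g hg).trans (h₂ g hg)⟩

variable {K : Set A}

theorem syntCong_funMap_update {x y : A} (h : syntCong L K x y) {n : ℕ} (f : L.Functions n)
    (i : Fin n) (v : Fin n → A) :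
    syntCong L K (funMap f (update v i x)) (funMap f (update v i y)) :=
  fun _ hg => h _ (mul_mem hg (elemTranslation_mem_translationMonoid f i v))

theorem syntCong_funMap {n : ℕ} (f : L.Functions n) {v w : Fin n → A}
    (h : ∀ i, syntCong L K (v i) (w i)) : syntCong L K (funMap f v) (funMap f w) :=
  (syntSetoid L K).rel_apply_of_forall_rel_update
    (fun _ i _ _ hxy => syntCong_funMap_update hxy f i _) h

theorem mem_iff_mem_of_syntCong {a b : A} (h : syntCong L K a b) : a ∈ K ↔ b ∈ K :=
  h 1 (one_mem _)

end SyntacticCongruence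

structure DiscreteCongruence (L : Language) (A : Type*) [TopologicalSpace A] [L.Structure A]
    extends DiscreteQuotient A where
  funMap_rel {n : ℕ} (f : L.Functions n) {v w : Fin n → A} :
    (∀ i, toSetoid (v i) (w i)) → toSetoid (funMap f v) (funMap f w)

namespace DiscreteCongruence

variable [TopologicalSpace A] (c : DiscreteCongruence L A)

/-- Relations hold everywhere in the quotient, so that the projection is a homomorphism. -/
noncomputable instance : L.Structure c.toDiscreteQuotient where
  funMap f v := c.proj (funMap f fun i => (v i).out)
  RelMap _ _ := True

noncomputable def projHom : A →[L] c.toDiscreteQuotient where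
  toFun := c.proj
  map_fun' f v := Quotient.sound <| c.funMap_rel f fun i => c.iseqv.symm (Quotient.mk_out (v i))
  map_rel' _ _ _ := trivial

theorem projHom_eq_iff {a b : A} : c.projHom a = c.projHom b ↔ c.toSetoid a b :=
  Quotient.eq

end DiscreteCongruence

theorem residuallyFinite_of_forall_ne_exists_discreteCongruence [TopologicalSpace A]
    [CompactSpace A] (h : ∀ a b : A, a ≠ b → ∃ c : DiscreteCongruence L A, ¬ c.toSetoid a b) :
    ResiduallyFinite L A := by
  intro a b hab
  obtain ⟨c, hc⟩ := h a b hab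
  obtain ⟨m, ⟨e⟩⟩ := Finite.exists_equiv_fin c.toDiscreteQuotient
  let _ : L.Structure (Fin m) := e.inducedStructure
  refine ⟨Fin m, inferInstance, ⊥, e.inducedStructure, ⟨rfl⟩,
    e.inducedStructureEquiv.toHom.comp c.projHom, ?_, ?_⟩
  · exact (continuous_of_discreteTopology (f := e)).comp c.proj_continuous
  · simpa [c.projHom_eq_iff] using hc

section Uniform

variable [UniformSpace A] [CompactSpace A]

theorem uniformEquicontinuous_of_residuallyFinite (h : ResiduallyFinite L A) :
    UniformEquicontinuous fun g : translationMonoid L A => (g.1 : A → A) := by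
  refine CompactSpace.uniformEquicontinuous_of_forall_exists_isClopen_mapsTo fun p hp => ?_
  obtain ⟨F, _, _, _, _, φ, hφ, hφp⟩ := h p.1 p.2 hp
  exact ⟨_, isClopen_setOf_apply_eq hφ, fun q (hq : q.1 = q.2) => congrArg φ hq, hφp,
    fun g => φ.mapsTo_setOf_apply_eq_of_mem_translationMonoid g.2⟩

theorem setOf_syntCong_mem_uniformity
    (h : UniformEquicontinuous fun g : translationMonoid L A => (g.1 : A → A))
    {K : Set A} (hK : IsClopen K) : {q : A × A | syntCong L K q.1 q.2} ∈ 𝓤 A := by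
  have hW : {q : A × A | K.boolIndicator q.1 = K.boolIndicator q.2} ∈ 𝓤 A := by
    rw [← nhdsSet_diagonal_eq_uniformity]
    exact (isClopen_setOf_apply_eq ((continuous_boolIndicator_iff_isClopen K).2 hK)).isOpen
      |>.mem_nhdsSet.2 fun q (hq : q.1 = q.2) => congrArg K.boolIndicator hq
  refine mem_of_superset (h _ hW) fun q hq g hg => ?_
  simpa only [mem_iff_boolIndicator] using Bool.eq_iff_iff.1 (hq ⟨g, hg⟩)

theorem residuallyFinite_of_uniformEquicontinuous [TotallySeparatedSpace A]
    (h : UniformEquicontinuous fun g : translationMonoid L A => (g.1 : A → A)) :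
    ResiduallyFinite L A := by
  refine residuallyFinite_of_forall_ne_exists_discreteCongruence fun a b hab => ?_
  obtain ⟨K, hK, haK, hbK⟩ := exists_isClopen_of_totally_separated hab
  refine ⟨⟨⟨syntSetoid L K, isOpen_setOf_rel_of_mem_uniformity _
    (setOf_syntCong_mem_uniformity h hK)⟩, syntCong_funMap⟩, fun hab => ?_⟩
  exact hbK ((mem_iff_mem_of_syntCong hab).1 haK)

end Uniform

end TranslationMonoid

theorem residuallyFinite_iff_equicontinuous_general (L : FirstOrder.Language) {A : Type*}
    [TopologicalSpace A] [L.Structure A]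
    [CompactSpace A] [T2Space A] [TotallyDisconnectedSpace A] :
    ResiduallyFinite L A ↔
      (letI : UniformSpace A := uniformSpaceOfCompactR1
       Equicontinuous fun g : translationMonoid L A => (g.1 : A → A)) := by
  let _ : UniformSpace A := uniformSpaceOfCompactR1
  exact ⟨fun h => (uniformEquicontinuous_of_residuallyFinite h).equicontinuous,
    fun h => residuallyFinite_of_uniformEquicontinuous
      (CompactSpace.uniformEquicontinuous_of_equicontinuous h)⟩

/-- A Stone topological `L`-algebra is profinite iff its translation monoid is
equicontinuous (w.r.t. the unique compatible uniformity on the compact Hausdorff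
space `A`). -/
theorem residuallyFinite_iff_equicontinuous (L : FirstOrder.Language) {A : Type*}
    [TopologicalSpace A] [L.Structure A]
    [CompactSpace A] [T2Space A] [TotallyDisconnectedSpace A]
    (hA : ∀ (n : ℕ) (f : L.Functions n), Continuous fun v : Fin n → A => funMap f v) :
    ResiduallyFinite L A ↔
      (letI : UniformSpace A := uniformSpaceOfCompactR1
       Equicontinuous fun g : translationMonoid L A => (g.1 : A → A)) :=
  residuallyFinite_iff_equicontinuous_general L
end

section
/- Let A be a Stone topological L-algebra. Then A is residually finite (i.e., profinite) if and only if the set {f : C(A, A) | the underlying function of f belongs to M(A)} has compact closure in the space C(A, A) of continuous self-maps of A equipped with the compact-open topology. -/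
open FirstOrder Language Structure

/-!
Everything runs through *open congruences*: congruences of `A` all of whose classes are open. On a
compact algebra their quotients are finite and discrete, and conversely kernels of continuous
homomorphisms to finite discrete algebras are open congruences, so residual finiteness says exactly
that open congruences separate points.

If they do, every entourage of the (unique) uniformity of `A` contains an open congruence, by
compactness of the complement of an open neighbourhood of the diagonal. Translations preserve
congruences, so `M(A)` is equicontinuous and Arzelà–Ascoli gives compactness of its closure.

Conversely, two points of a Stone space are separated by a clopen set `K`, and hence by the
syntactic congruence of `K`. If `M(A)` has compact closure, the tube lemma applied to that closure
shows that the classes of this congruence are open.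
-/

open Topology

theorem Setoid.rel_of_rel_update {ι α β : Type*} [Finite ι] [DecidableEq ι]
    {rα : α → α → Prop} {r : Setoid β} {F : (ι → α) → β}
    (hF : ∀ (v : ι → α) (i : ι) {a b : α}, rα a b →
      r (F (Function.update v i a)) (F (Function.update v i b)))
    {v w : ι → α} (hvw : ∀ i, rα (v i) (w i)) : r (F v) (F w) := by
  have : Fintype ι := Fintype.ofFinite ι
  suffices ∀ s : Finset ι, r (F v) (F (s.piecewise w v)) by
    simpa using this Finset.univ
  intro s
  induction s using Finset.induction_on with
  | empty => simp only [Finset.piecewise_empty]; exact r.refl _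
  | @insert j s hj ih =>
    refine r.trans ih ?_
    rw [Finset.piecewise_insert]
    conv_lhs =>
      rw [← Function.update_eq_self j (s.piecewise w v), s.piecewise_eq_of_notMem _ _ hj]
    exact hF _ j (hvw j)

theorem IsCompact.eventually_forall_mem_iff {X Y : Type*} [TopologicalSpace X]
    [TopologicalSpace Y] [LocallyCompactPair X Y] {T : Set C(X, Y)} (hT : IsCompact T)
    {K : Set Y} (hK : IsClopen K) (x₀ : X) :
    ∀ᶠ x in 𝓝 x₀, ∀ f ∈ T, (f x ∈ K ↔ f x₀ ∈ K) := by
  refine hT.eventually_forall_of_forall_eventually fun f _ => ?_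
  have hopen : IsOpen {p : Y × Y | p.1 ∈ K ↔ p.2 ∈ K} := by
    have : {p : Y × Y | p.1 ∈ K ↔ p.2 ∈ K} = K ×ˢ K ∪ Kᶜ ×ˢ Kᶜ := by
      ext
      simp only [Set.mem_ofPred_eq, Set.mem_union, Set.mem_prod, Set.mem_compl_iff]
      tauto
    exact this ▸ (hK.isOpen.prod hK.isOpen).union (hK.compl.isOpen.prod hK.compl.isOpen)
  have hcont : Continuous fun q : X × C(X, Y) => (q.2 q.1, q.2 x₀) := by fun_prop
  exact hcont.continuousAt.preimage_mem_nhds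
    (hopen.mem_nhds (show (f x₀, f x₀) ∈ _ from Iff.rfl))

theorem ContinuousMap.isCompact_closure_of_equicontinuous {X α : Type*} [TopologicalSpace X]
    [CompactlyCoherentSpace X] [UniformSpace α] [CompactSpace α] [T2Space α]
    {S : Set C(X, α)} (hS : Equicontinuous ((↑) : S → X → α)) : IsCompact (closure S) := by
  refine ArzelaAscoli.isCompact_closure_of_isClosedEmbedding (F := fun f : C(X, α) => ⇑f)
    (𝔖 := {K | IsCompact K}) (fun _ hK => hK)
    ⟨isUniformEmbedding_toUniformOnFunIsCompact.isEmbedding, ?_⟩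
    (fun K _ => hS.equicontinuousOn K)
    (fun _ _ _ _ => ⟨Set.univ, isCompact_univ, fun _ _ => Set.mem_univ _⟩)
  change IsClosed (Set.range toUniformOnFunIsCompact)
  rw [range_toUniformOnFunIsCompact]
  exact UniformOnFun.isClosed_setOfPred_continuous CompactlyCoherentSpace.isCoherentWith

section Algebra

variable {L : FirstOrder.Language} {A : Type*} [L.Structure A]

theorem continuous_of_mem_translationMonoid [TopologicalSpace A]
    (hA : ∀ (n : ℕ) (f : L.Functions n), Continuous fun v : Fin n → A => funMap f v)
    {g : Function.End A} (hg : g ∈ translationMonoid L A) : Continuous g := by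
  induction hg using Submonoid.closure_induction with
  | mem g hg =>
    obtain ⟨n, f, i, v, rfl⟩ := hg
    exact (hA n f).comp (continuous_const.update i continuous_id)
  | one => exact continuous_id
  | mul g g' _ _ hg hg' => exact hg.comp hg'

variable (L) in
structure IsOpenCongruence [TopologicalSpace A] (s : Setoid A) : Prop where
  funMap_rel : ∀ {n : ℕ} (f : L.Functions n) {v w : Fin n → A},
    (∀ i, s (v i) (w i)) → s (funMap f v) (funMap f w)
  isOpen_setOf_rel : ∀ x, IsOpen {y | s x y}

namespace IsOpenCongruence

variable [TopologicalSpace A] {s t : Setoid A}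

theorem rel_apply_of_mem_translationMonoid (hs : IsOpenCongruence L s) {g : Function.End A}
    (hg : g ∈ translationMonoid L A) {x y : A} (hxy : s x y) : s (g x) (g y) := by
  induction hg using Submonoid.closure_induction generalizing x y with
  | mem g hg =>
    obtain ⟨n, f, i, v, rfl⟩ := hg
    refine hs.funMap_rel f fun j => ?_
    rcases eq_or_ne j i with rfl | hj
    · simpa only [Function.update_self]
    · simpa only [Function.update_of_ne hj] using s.refl (v j)
  | one => exact hxy
  | mul g g' _ _ hg hg' => exact hg (hg' hxy)

theorem ker {F : Type*} [L.Structure F] [TopologicalSpace F] [DiscreteTopology F]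
    (φ : A →[L] F) (hφ : Continuous φ) : IsOpenCongruence L (Setoid.ker φ) where
  funMap_rel f _ _ h := by
    simp only [Setoid.ker_def, Hom.map_fun]
    exact congrArg _ (funext h)
  isOpen_setOf_rel x := by
    convert (isOpen_discrete {φ x}).preimage hφ using 1
    exact Set.ext fun y => eq_comm

theorem top : IsOpenCongruence L (⊤ : Setoid A) where
  funMap_rel _ _ _ _ := trivial
  isOpen_setOf_rel _ := isOpen_univ

theorem inf (hs : IsOpenCongruence L s) (ht : IsOpenCongruence L t) :
    IsOpenCongruence L (s ⊓ t) where
  funMap_rel f _ _ h := Setoid.inf_iff_and.2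
    ⟨hs.funMap_rel f fun i => (Setoid.inf_iff_and.1 (h i)).1,
      ht.funMap_rel f fun i => (Setoid.inf_iff_and.1 (h i)).2⟩
  isOpen_setOf_rel x := (hs.isOpen_setOf_rel x).inter (ht.isOpen_setOf_rel x)

theorem isOpen_setOf_not_rel (hs : IsOpenCongruence L s) :
    IsOpen {p : A × A | ¬ s p.1 p.2} := by
  refine isOpen_iff_mem_nhds.2 fun p hp => Filter.mem_of_superset
    (((hs.isOpen_setOf_rel p.1).prod (hs.isOpen_setOf_rel p.2)).mem_nhds
      ⟨s.refl p.1, s.refl p.2⟩) fun q hq hrel => hp ?_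
  exact s.trans hq.1 (s.trans hrel (s.symm hq.2))

end IsOpenCongruence

theorem exists_isOpenCongruence_subset [TopologicalSpace A] [CompactSpace A]
    (hsep : ∀ a b : A, a ≠ b → ∃ s : Setoid A, IsOpenCongruence L s ∧ ¬ s a b)
    {W : Set (A × A)} (hW : W ∈ 𝓝ˢ (Set.diagonal A)) :
    ∃ s : Setoid A, IsOpenCongruence L s ∧ ∀ x y, s x y → (x, y) ∈ W := by
  obtain ⟨V, hV, hdiag, hVW⟩ := mem_nhdsSet_iff_exists.1 hW
  have : Nonempty {s : Setoid A // IsOpenCongruence L s} := ⟨⟨⊤, .top⟩⟩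
  obtain ⟨⟨s, hs⟩, hcover⟩ := hV.isClosed_compl.isCompact.elim_directed_cover
    (fun s : {s : Setoid A // IsOpenCongruence L s} => {p : A × A | ¬ s.1 p.1 p.2})
    (fun s => s.2.isOpen_setOf_not_rel)
    (fun p hp => Set.mem_iUnion.2 <|
      let ⟨s, hs, hps⟩ := hsep p.1 p.2 fun h => hp (hdiag h); ⟨⟨s, hs⟩, hps⟩)
    (fun s t => ⟨⟨s.1 ⊓ t.1, s.2.inf t.2⟩, fun p hp h => hp (Setoid.inf_iff_and.1 h).1,
      fun p hp h => hp (Setoid.inf_iff_and.1 h).2⟩)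
  exact ⟨s, hs, fun x y hxy => hVW (by_contra fun h => hcover h hxy)⟩

theorem equicontinuous_translations [UniformSpace A] [CompactSpace A]
    (hsep : ∀ a b : A, a ≠ b → ∃ s : Setoid A, IsOpenCongruence L s ∧ ¬ s a b) :
    Equicontinuous ((↑) : {f : C(A, A) | ⇑f ∈ translationMonoid L A} → A → A) := by
  intro x U hU
  rw [← nhdsSet_diagonal_eq_uniformity] at hU
  obtain ⟨s, hs, hsU⟩ := exists_isOpenCongruence_subset hsep hU
  filter_upwards [(hs.isOpen_setOf_rel x).mem_nhds (s.refl x)] with y hy f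
  exact hsU _ _ (hs.rel_apply_of_mem_translationMonoid f.2 hy)

theorem syntCong.apply_of_mem_translationMonoid {K : Set A} {a b : A} (hab : syntCong L K a b)
    {t : Function.End A} (ht : t ∈ translationMonoid L A) : syntCong L K (t a) (t b) :=
  fun g hg => hab (g * t) (mul_mem hg ht)

variable (L) in
def syntCongSetoid (K : Set A) : Setoid A where
  r := syntCong L K
  iseqv := ⟨fun _ _ _ => Iff.rfl, fun h g hg => (h g hg).symm,
    fun h h' g hg => (h g hg).trans (h' g hg)⟩

theorem isOpenCongruence_syntCongSetoid [TopologicalSpace A] [LocallyCompactPair A A]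
    (hA : ∀ (n : ℕ) (f : L.Functions n), Continuous fun v : Fin n → A => funMap f v)
    (hc : IsCompact (closure {f : C(A, A) | (⇑f : Function.End A) ∈ translationMonoid L A}))
    {K : Set A} (hK : IsClopen K) : IsOpenCongruence L (syntCongSetoid L K) where
  funMap_rel f _ _ := Setoid.rel_of_rel_update (rα := syntCong L K) (r := syntCongSetoid L K)
    fun v i {_ _} hab =>
      hab.apply_of_mem_translationMonoid (Submonoid.subset_closure ⟨_, f, i, v, rfl⟩)
  isOpen_setOf_rel x := isOpen_iff_mem_nhds.2 fun y hxy => by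
    filter_upwards [hc.eventually_forall_mem_iff hK y] with z hz g hg
    exact (hxy g hg).trans
      (hz ⟨g, continuous_of_mem_translationMonoid hA hg⟩ (subset_closure hg)).symm

theorem residuallyFinite_iff_forall_exists_isOpenCongruence [TopologicalSpace A]
    [CompactSpace A] :
    ResiduallyFinite L A ↔
      ∀ a b : A, a ≠ b → ∃ s : Setoid A, IsOpenCongruence L s ∧ ¬ s a b := by
  refine ⟨fun h a b hab => ?_, fun h a b hab => ?_⟩
  · obtain ⟨F, _, _, _, _, φ, hφ, hφab⟩ := h a b hab
    exact ⟨Setoid.ker φ, .ker φ hφ, hφab⟩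
  obtain ⟨s, hs, hsab⟩ := h a b hab
  -- Interpreting every relation symbol as true makes the quotient map a homomorphism.
  let _ : L.Prestructure s :=
    ⟨⟨fun f => funMap f, fun _ _ => True⟩, fun _ _ => hs.funMap_rel _, fun _ _ _ => rfl⟩
  let _ : TopologicalSpace (Quotient s) := ⊥
  have : DiscreteTopology (Quotient s) := ⟨rfl⟩
  have hmk : Continuous (Quotient.mk s) := continuous_discrete_rng.2 fun c =>
    c.inductionOn fun x => by
      convert hs.isOpen_setOf_rel x using 1
      exact Set.ext fun y => Quotient.eq.trans ⟨s.symm, s.symm⟩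
  have : CompactSpace (Quotient s) := Quotient.mk_surjective.compactSpace hmk
  have : Finite (Quotient s) := finite_of_compact_of_discrete
  obtain ⟨m, ⟨e⟩⟩ := Finite.exists_equiv_fin (Quotient s)
  let _ := e.inducedStructure (L := L)
  let mk : A →[L] Quotient s :=
    ⟨Quotient.mk s, fun f x => (funMap_quotient_mk' s f x).symm,
      fun r x _ => (relMap_quotient_mk' s r x).2 trivial⟩
  exact ⟨Fin m, inferInstance, inferInstance, inferInstance, inferInstance,
    (e.inducedStructureEquiv (L := L)).toHom.comp mk,
    (continuous_of_discreteTopology (f := e)).comp hmk,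
    fun h => hsab (Quotient.exact (e.injective h))⟩

end Algebra

/-- A Stone topological `L`-algebra is profinite iff its translation monoid is
relatively compact in `C(A, A)` with the compact-open topology. -/
theorem residuallyFinite_iff_relatively_compact (L : FirstOrder.Language) {A : Type*}
    [TopologicalSpace A] [L.Structure A]
    [CompactSpace A] [T2Space A] [TotallyDisconnectedSpace A]
    (hA : ∀ (n : ℕ) (f : L.Functions n), Continuous fun v : Fin n → A => funMap f v) :
    ResiduallyFinite L A ↔
      IsCompact (closure {f : C(A, A) | (⇑f : Function.End A) ∈ translationMonoid L A}) := by
  let _ := uniformSpaceOfCompactR1 (γ := A)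
  rw [residuallyFinite_iff_forall_exists_isOpenCongruence]
  refine ⟨fun hsep => ContinuousMap.isCompact_closure_of_equicontinuous
    (equicontinuous_translations hsep), fun hc a b hab => ?_⟩
  obtain ⟨K, hK, haK, hbK⟩ := exists_isClopen_of_totally_separated hab
  exact ⟨syntCongSetoid L K, isOpenCongruence_syntCongSetoid hA hc hK,
    fun h => hbK ((h 1 (one_mem _)).1 haK)⟩
end
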